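/- For every (h,(m,ε)) ∈ Σ, the cylinder C[h·m^ε] = {x ∈ (0,1]∖ℚ : σ₁(x) = (h,(m,ε))} satisfies μ(C[h·m^ε]) ≤ 3 / ( (log 3)·(4h² + 8h + 3)·m² ). -/

import Mathlib

open MeasureTheory Filter

noncomputable section

/-- The ECF digit `k` of a point `x ∈ (0,1]`: `x ∈ B(k,ξ)`. -/
def ecfK (x : ℝ) : ℕ := (⌊1/x⌋ + 1).toNat / 2

/-- The ECF digit `ξ` of a point `x ∈ (0,1]`. -/
def ecfXi (x : ℝ) : ℤ := if ⌊1/x⌋ % 2 = 0 then 1 else -1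

/-- The ECF Gauss-like map `T(x) = ξ (1/x - 2k)` for `x ∈ B(k,ξ)`. -/
def ecfT (x : ℝ) : ℝ := (ecfXi x : ℝ) * (1/x - 2 * (ecfK x : ℝ))

/-- The domain: irrational points of `(0,1]`. -/
def ECFdom : Set ℝ := {x | x ∈ Set.Ioc (0:ℝ) 1 ∧ Irrational x}

/-- The `n`-th ECF digit `k_n(x)` (for `n ≥ 1`). -/
def ecfDigK (x : ℝ) (n : ℕ) : ℕ := ecfK (ecfT^[n-1] x)

/-- The `n`-th ECF digit `ξ_n(x)` (for `n ≥ 1`), with the convention `ξ_0 = 1`. -/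
def ecfDigXi (x : ℝ) (n : ℕ) : ℤ := if n = 0 then 1 else ecfXi (ecfT^[n-1] x)

/-- Numerators of continued fractions with even partial quotients built from digit
sequences `(k_n)_{n≥1}`, `(ξ_n)_{n≥0}`:
`p_n = 2 k_n p_{n-1} + ξ_{n-1} p_{n-2}`, `p_0 = 0`, `p_{-1} = 1`. -/
def cfP (k : ℕ → ℕ) (ξ : ℕ → ℤ) : ℕ → ℤ
  | 0 => 0
  | 1 => ξ 0
  | (n+2) => 2 * (k (n+2) : ℤ) * cfP k ξ (n+1) + ξ (n+1) * cfP k ξ n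

/-- Denominators: `q_n = 2 k_n q_{n-1} + ξ_{n-1} q_{n-2}`, `q_0 = 1`, `q_{-1} = 0`. -/
def cfQ (k : ℕ → ℕ) (ξ : ℕ → ℤ) : ℕ → ℤ
  | 0 => 1
  | 1 => 2 * (k 1 : ℤ)
  | (n+2) => 2 * (k (n+2) : ℤ) * cfQ k ξ (n+1) + ξ (n+1) * cfQ k ξ n

/-- The ECF convergent numerators `p_n(x)`. -/
def ecfP (x : ℝ) : ℕ → ℤ := cfP (ecfDigK x) (ecfDigXi x)

/-- The ECF convergent denominators `q_n(x)`. -/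
def ecfQ (x : ℝ) : ℕ → ℤ := cfQ (ecfDigK x) (ecfDigXi x)

/-- `τ(x) = min {j ≥ 0 : T^j(x) ∈ (0,1/2]}`. -/
def ecfTau (x : ℝ) : ℕ := sInf {j : ℕ | ecfT^[j] x ∈ Set.Ioc (0:ℝ) (1/2)}

/-- The jump transformation `R(x) = T^{τ(x)+1}(x)`. -/
def ecfR (x : ℝ) : ℝ := ecfT^[ecfTau x + 1] x

/-- `ν_0(x) = 1`, `ν_n(x) = ν_{n-1}(x) + τ(R^{n-1}(x)) + 1`. -/
def ecfNu (x : ℝ) : ℕ → ℕ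
  | 0 => 1
  | (n+1) => ecfNu x n + ecfTau (ecfR^[n] x) + 1

/-- The `R`-denominators: `q̂_0(x) = 1`, `q̂_n(x) = q_{ν_n(x)}(x)`. -/
def ecfQhat (x : ℝ) (n : ℕ) : ℤ := if n = 0 then 1 else ecfQ x (ecfNu x n)

/-- The renewal time `n̂_L(x) = min {n ≥ 1 : q̂_n(x) > L}`. -/
def ecfNhat (x : ℝ) (L : ℝ) : ℕ := sInf {n : ℕ | 1 ≤ n ∧ L < (ecfQhat x n : ℝ)}

/-- The `R`-invariant probability measure `μ`, with density
`f(x) = (1/log 3)(1/(3-x) + 1/(1+x))` on `(0,1]`. -/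
def ecfMu : Measure ℝ :=
  (volume.restrict (Set.Ioc 0 1)).withDensity
    (fun x => ENNReal.ofReal ((1/Real.log 3) * (1/(3-x) + 1/(1+x))))

/-- Σ-coding components: `h_n(x) = τ(R^{n-1}(x))`. -/
def sigmaH (x : ℝ) (n : ℕ) : ℕ := ecfTau (ecfR^[n-1] x)

/-- Σ-coding components: `m_n(x) = k_{ν_n(x)-1}(x)`. -/
def sigmaM (x : ℝ) (n : ℕ) : ℕ := ecfDigK x (ecfNu x n - 1)

/-- Σ-coding components: `ε_n(x) = ξ_{ν_n(x)-1}(x)`. -/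
def sigmaE (x : ℝ) (n : ℕ) : ℤ := ecfDigXi x (ecfNu x n - 1)

/-- The alphabet `Σ = ℕ₀ × ((ℕ × {±1}) ∖ {(1,-1)})`, as a subset of `ℕ × (ℕ × ℤ)`. -/
def SigmaSymb : Set (ℕ × (ℕ × ℤ)) :=
  {s | 1 ≤ s.2.1 ∧ ((s.2.2 = 1 ∨ s.2.2 = -1) ∧ ¬(s.2.1 = 1 ∧ s.2.2 = -1))}

/-- The full Σ-coding `σ_n(x) = (h_n, (m_n, ε_n))`. -/
def sigmaCode (x : ℝ) (n : ℕ) : ℕ × (ℕ × ℤ) := (sigmaH x n, (sigmaM x n, sigmaE x n))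

end

/-!
On `(1/2, 1]` the map is `T x = 2 - 1/x`, which linearises as `1/(1 - T x) = 1/(1 - x) - 1`.
So if `τ(x) = h` then `1/(1 - x) = h + 1/(1 - T^h x)`, and `T^h x` lies in `(1/(n+1), 1/n)` with
`n = ⌊1/T^h x⌋ ∈ {2m, 2m - 1}`. Hence the cylinder lies in an explicit interval of length
`1/((n(h+1)+1)((n-1)(h+1)+1))` inside `(h/(h+1), 1)`, where the density of `μ` is at most
`(1/2 + (h+1)/(2h+1))/log 3`.
-/

open MeasureTheory Set

lemma ecfT_eq {x : ℝ} (hx : 0 < x) :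
    ecfT x = if Even ⌊1/x⌋ then Int.fract (1/x) else 1 - Int.fract (1/x) := by
  have hfloor : 0 ≤ ⌊1/x⌋ := Int.floor_nonneg.2 (by positivity)
  rcases Int.even_or_odd' ⌊1/x⌋ with ⟨k, hk | hk⟩
  · have hK : (ecfK x : ℤ) = k := by rw [ecfK, hk]; omega
    have hXi : ecfXi x = 1 := by rw [ecfXi, hk]; simp
    rw [if_pos ⟨k, by omega⟩, ecfT, hXi, Int.fract, hk, ← hK]
    push_cast; ring
  · have hK : (ecfK x : ℤ) = k + 1 := by rw [ecfK, hk]; omega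
    have hXi : ecfXi x = -1 := by rw [ecfXi, hk]; simp
    rw [if_neg (by rw [hk]; exact Int.not_even_two_mul_add_one k), ecfT, hXi, Int.fract, hk]
    rw [show (ecfK x : ℝ) = k + 1 by exact_mod_cast hK]
    push_cast; ring

lemma ecfT_mem_ECFdom {x : ℝ} (hx : x ∈ ECFdom) : ecfT x ∈ ECFdom := by
  obtain ⟨⟨hx0, -⟩, hirr⟩ := hx
  have hirr' : Irrational (1/x) := by simpa [one_div] using hirr.inv
  have hfract : Irrational (Int.fract (1/x)) := hirr'.sub_intCast _
  have hpos : 0 < Int.fract (1/x) := Int.fract_pos.2 (hirr'.ne_int _)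
  have hlt := Int.fract_lt_one (1/x)
  rw [ecfT_eq hx0]
  split_ifs
  · exact ⟨⟨hpos, hlt.le⟩, hfract⟩
  · refine ⟨⟨by linarith, by linarith⟩, ?_⟩
    simpa using hfract.intCast_sub 1

lemma iterate_ecfT_mem_ECFdom {x : ℝ} (hx : x ∈ ECFdom) (j : ℕ) : ecfT^[j] x ∈ ECFdom := by
  induction j with
  | zero => exact hx
  | succ j ih => rw [Function.iterate_succ_apply']; exact ecfT_mem_ECFdom ih

lemma ecfT_of_half_lt {x : ℝ} (hx : 1/2 < x) (hx1 : x ≤ 1) : ecfT x = 2 - 1/x := by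
  have hfloor : ⌊1/x⌋ = 1 := by
    rw [Int.floor_eq_iff]
    constructor
    · rw [le_div_iff₀ (by linarith)]; push_cast; linarith
    · rw [div_lt_iff₀ (by linarith)]; push_cast; linarith
  rw [ecfT_eq (by linarith), hfloor, if_neg Int.not_even_one, Int.fract, hfloor]
  push_cast; ring

lemma inv_one_sub_ecfT {x : ℝ} (hx : 1/2 < x) (hx1 : x < 1) :
    (1 - ecfT x)⁻¹ = (1 - x)⁻¹ - 1 := by
  have hx0 : x ≠ 0 := by linarith
  have hx1' : 1 - x ≠ 0 := by linarith
  rw [ecfT_of_half_lt hx hx1.le, show 1 - (2 - 1/x) = (1 - x) / x by field_simp; ring]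
  field_simp
  ring

lemma lt_one_of_mem_ECFdom {x : ℝ} (hx : x ∈ ECFdom) : x < 1 :=
  lt_of_le_of_ne hx.1.2 hx.2.ne_one

lemma inv_one_sub_iterate_ecfT {x : ℝ} (hx : x ∈ ECFdom) {h : ℕ}
    (hhalf : ∀ j < h, 1/2 < ecfT^[j] x) : (1 - ecfT^[h] x)⁻¹ = (1 - x)⁻¹ - h := by
  induction h with
  | zero => simp
  | succ h ih =>
    rw [Function.iterate_succ_apply', inv_one_sub_ecfT (hhalf h h.lt_succ_self)
      (lt_one_of_mem_ECFdom (iterate_ecfT_mem_ECFdom hx h)),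
      ih fun j hj => hhalf j (hj.trans h.lt_succ_self)]
    push_cast; ring

lemma half_lt_iterate_ecfT {x : ℝ} (hx : x ∈ ECFdom) {j : ℕ} (hj : j < ecfTau x) :
    1/2 < ecfT^[j] x := by
  have hnot := Nat.notMem_of_lt_sInf hj
  simp only [Set.mem_ofPred_eq, Set.mem_Ioc, not_and, not_le] at hnot
  exact hnot (iterate_ecfT_mem_ECFdom hx j).1.1

lemma sigmaCode_one (x : ℝ) :
    sigmaCode x 1 = (ecfTau x, ecfK (ecfT^[ecfTau x] x), ecfXi (ecfT^[ecfTau x] x)) := by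
  simp [sigmaCode, sigmaH, sigmaM, sigmaE, ecfNu, ecfDigK, ecfDigXi]

lemma floor_one_div_eq_two_mul_ecfK {y : ℝ} (hy : 0 < y) :
    ⌊1/y⌋ = 2 * ecfK y - if ecfXi y = 1 then 0 else 1 := by
  have hfloor : 0 ≤ ⌊1/y⌋ := Int.floor_nonneg.2 (by positivity)
  by_cases heven : ⌊1/y⌋ % 2 = 0
  · simp only [ecfK, ecfXi, if_pos heven, if_true]; omega
  · simp only [ecfK, ecfXi, if_neg heven, reduceCtorEq, if_false]; omega

lemma inv_one_sub_mem_Ioo {y : ℝ} (hy : y ∈ ECFdom) (hn : 2 ≤ ⌊1/y⌋) :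
    (1 - y)⁻¹ ∈ Ioo (1 + 1/(⌊1/y⌋ : ℝ)) (1 + 1/((⌊1/y⌋ : ℝ) - 1)) := by
  set u := 1/y with hu
  have hy0 : 0 < y := hy.1.1
  have hlow : (⌊u⌋ : ℝ) < u :=
    lt_of_le_of_ne (Int.floor_le u) (by simpa [hu, one_div] using (hy.2.inv.ne_int ⌊u⌋).symm)
  have hup : u < ⌊u⌋ + 1 := Int.lt_floor_add_one u
  have hn' : (2 : ℝ) ≤ ⌊u⌋ := by exact_mod_cast hn
  have hinv : (1 - y)⁻¹ = 1 + 1/(u - 1) := by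
    have hu1 : u - 1 ≠ 0 := by linarith
    have hy1 : 1 - y ≠ 0 := (sub_pos.2 (lt_one_of_mem_ECFdom hy)).ne'
    rw [hu] at hu1 ⊢; field_simp; ring
  rw [hinv]
  constructor
  · gcongr <;> linarith
  · gcongr
    linarith

/-- The value of `t ↦ 1 - 1/(H + 1/(1 - t))`, the inverse of `T^h` on the points whose first `h`
iterates stay in `(1/2, 1]`, at `t = 1/(N+1)`. -/
noncomputable def cylinderEndpoint (H N : ℝ) : ℝ := 1 - (H + 1 + 1/N)⁻¹

lemma mem_Ioo_cylinderEndpoint {x : ℝ} (hx : x ∈ ECFdom) {h : ℕ}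
    (hhalf : ∀ j < h, 1/2 < ecfT^[j] x) {n : ℤ} (hn : ⌊1/ecfT^[h] x⌋ = n) (hn2 : 2 ≤ n) :
    x ∈ Ioo (cylinderEndpoint h n) (cylinderEndpoint h (n - 1)) := by
  have hI := inv_one_sub_mem_Ioo (iterate_ecfT_mem_ECFdom hx h) (hn ▸ hn2)
  rw [hn, inv_one_sub_iterate_ecfT hx hhalf] at hI
  have hn' : (2 : ℝ) ≤ n := by exact_mod_cast hn2
  have : 0 < 1 / (n : ℝ) := one_div_pos.2 (by linarith)
  have hx1 : x = 1 - ((1 - x)⁻¹)⁻¹ := by rw [inv_inv]; ring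
  rw [hx1]
  constructor <;> unfold cylinderEndpoint <;> gcongr <;> linarith [hI.1, hI.2]

lemma cylinderEndpoint_nonneg {H N : ℝ} (hH : 0 ≤ H) (hN : 0 < N) : 0 ≤ cylinderEndpoint H N := by
  unfold cylinderEndpoint
  rw [sub_nonneg]
  have := one_div_pos.2 hN
  exact inv_le_one_of_one_le₀ (by linarith)

lemma cylinderEndpoint_le_one {H N : ℝ} (hH : 0 ≤ H) (hN : 0 < N) : cylinderEndpoint H N ≤ 1 := by
  unfold cylinderEndpoint
  have := one_div_pos.2 hN
  linarith [inv_pos.2 (by linarith : 0 < H + 1 + 1/N)]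

lemma div_add_one_le_cylinderEndpoint {H N : ℝ} (hH : 0 ≤ H) (hN : 0 < N) :
    H / (H + 1) ≤ cylinderEndpoint H N := by
  unfold cylinderEndpoint
  have := one_div_pos.2 hN
  rw [show H / (H + 1) = 1 - (H + 1)⁻¹ by field_simp; ring]
  exact sub_le_sub_left (inv_anti₀ (by positivity) (by linarith)) 1

lemma cylinderEndpoint_sub_cylinderEndpoint {H N : ℝ} (hH : 0 ≤ H) (hN : 1 < N) :
    cylinderEndpoint H (N - 1) - cylinderEndpoint H N
      = ((N * (H + 1) + 1) * ((N - 1) * (H + 1) + 1))⁻¹ := by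
  have hinv : ∀ N : ℝ, 0 < N → (H + 1 + 1/N)⁻¹ = N / (N * (H + 1) + 1) := by
    intro N hN
    have : N * (H + 1) + 1 ≠ 0 := by positivity
    field_simp
  have h3 : 0 < N * (H + 1) + 1 := by positivity
  have h4 : 0 < (N - 1) * (H + 1) + 1 := by nlinarith
  unfold cylinderEndpoint
  rw [hinv N (by linarith), hinv (N - 1) (by linarith)]
  field_simp
  ring

lemma ecfMu_Ioo_le {a b : ℝ} (ha : 0 ≤ a) (hb : b ≤ 1) :
    ecfMu (Ioo a b) ≤ ENNReal.ofReal ((1/(3 - b) + 1/(1 + a)) * (b - a) / Real.log 3) := by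
  have hlog : 0 < Real.log 3 := Real.log_pos (by norm_num)
  have h3b : 0 < 3 - b := by linarith
  have hdensity : ∀ x ∈ Ioo a b, ENNReal.ofReal ((1/Real.log 3) * (1/(3 - x) + 1/(1 + x)))
      ≤ ENNReal.ofReal ((1/Real.log 3) * (1/(3 - b) + 1/(1 + a))) := by
    intro x ⟨hax, hxb⟩
    apply ENNReal.ofReal_le_ofReal
    gcongr
  calc ecfMu (Ioo a b)
      = ∫⁻ x in Ioo a b, ENNReal.ofReal ((1/Real.log 3) * (1/(3 - x) + 1/(1 + x)))
          ∂(volume.restrict (Ioc 0 1)) := withDensity_apply _ measurableSet_Ioo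
    _ ≤ ∫⁻ _ in Ioo a b, ENNReal.ofReal ((1/Real.log 3) * (1/(3 - b) + 1/(1 + a)))
          ∂(volume.restrict (Ioc 0 1)) := setLIntegral_mono measurable_const hdensity
    _ = ENNReal.ofReal ((1/Real.log 3) * (1/(3 - b) + 1/(1 + a)))
          * volume.restrict (Ioc 0 1) (Ioo a b) := setLIntegral_const _ _
    _ ≤ ENNReal.ofReal ((1/Real.log 3) * (1/(3 - b) + 1/(1 + a))) * volume (Ioo a b) := by
        gcongr
        exact Measure.restrict_le_self
    _ = ENNReal.ofReal ((1/(3 - b) + 1/(1 + a)) * (b - a) / Real.log 3) := by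
        rw [Real.volume_Ioo, ← ENNReal.ofReal_mul (by positivity)]
        congr 1
        ring

lemma density_mul_length_le {H N M : ℝ} (hH : 0 ≤ H) (hM : 1 ≤ M)
    (hN : N = 2 * M ∨ (N = 2 * M - 1 ∧ 2 ≤ M)) :
    (1/(3 - cylinderEndpoint H (N - 1)) + 1/(1 + cylinderEndpoint H N))
        * (cylinderEndpoint H (N - 1) - cylinderEndpoint H N)
      ≤ 3 / ((4 * H^2 + 8 * H + 3) * M^2) := by
  have hN2 : 2 ≤ N := by rcases hN with h | h <;> linarith
  have hb : 1/(3 - cylinderEndpoint H (N - 1)) ≤ 1/2 := by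
    have := cylinderEndpoint_le_one hH (by linarith : 0 < N - 1)
    gcongr; linarith
  have ha : 1/(1 + cylinderEndpoint H N) ≤ (H + 1)/(2 * H + 1) := by
    have := div_add_one_le_cylinderEndpoint hH (by linarith : 0 < N)
    rw [div_le_div_iff₀ (by linarith [cylinderEndpoint_nonneg hH (by linarith : 0 < N)])
      (by positivity)]
    rw [div_le_iff₀ (by positivity)] at this
    nlinarith
  rw [cylinderEndpoint_sub_cylinderEndpoint hH (by linarith)]
  set d₁ := N * (H + 1) + 1
  set d₂ := (N - 1) * (H + 1) + 1
  have hd₁ : 0 < d₁ := by nlinarith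
  have hd₂ : 0 < d₂ := by nlinarith
  calc _ ≤ (1/2 + (H + 1)/(2 * H + 1)) * (d₁ * d₂)⁻¹ := by gcongr
    _ = (4 * H + 3) / (2 * (2 * H + 1) * (d₁ * d₂)) := by field_simp; ring
    _ ≤ 3 / ((4 * H^2 + 8 * H + 3) * M^2) := by
      rw [div_le_div_iff₀ (by positivity) (by positivity)]
      have hP : 0 ≤ 2 * H + 1 := by positivity
      rcases hN with rfl | ⟨rfl, hM2⟩
      · have h₁ : 2 * M * (H + 1) ≤ d₁ := by linarith
        have h₂ : M * (H + 2) ≤ d₂ := by nlinarith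
        have := mul_le_mul h₁ h₂ (by positivity) hd₁.le
        nlinarith [mul_le_mul_of_nonneg_left this hP, mul_nonneg hP (sq_nonneg (M * H))]
      · have h₁ : 3/2 * M * (H + 1) ≤ d₁ := by nlinarith
        have h₂ : M * (H + 1) ≤ d₂ := by nlinarith
        have := mul_le_mul h₁ h₂ (by positivity) hd₁.le
        nlinarith [mul_le_mul_of_nonneg_left this hP, mul_nonneg hP (sq_nonneg (M * H))]

/-- Measure of length-one Σ-cylinders:
`μ(C[h·m^ε]) ≤ 3 / (log 3 · (4h² + 8h + 3) · m²)`. -/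
theorem ecf_cylinder_measure_bound :
    ∀ (h m : ℕ) (ε : ℤ), 1 ≤ m → (ε = 1 ∨ ε = -1) → ¬(m = 1 ∧ ε = -1) →
      ecfMu {x : ℝ | x ∈ ECFdom ∧ sigmaCode x 1 = (h, (m, ε))} ≤
        ENNReal.ofReal (3 / (Real.log 3 * (4 * (h : ℝ)^2 + 8 * h + 3) * (m : ℝ)^2)) := by
  intro h m ε hm hε hne
  set n : ℤ := 2 * m - if ε = 1 then 0 else 1 with hn
  have hnm : (n : ℝ) = 2 * m ∨ ((n : ℝ) = 2 * m - 1 ∧ 2 ≤ (m : ℝ)) := by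
    rcases hε with rfl | rfl
    · left; simp [hn]
    · right; refine ⟨by simp [hn], ?_⟩; exact_mod_cast (by omega : 2 ≤ m)
  have hn2 : 2 ≤ n := by rcases hε with rfl | rfl <;> simp [hn] <;> omega
  have hsub : {x : ℝ | x ∈ ECFdom ∧ sigmaCode x 1 = (h, (m, ε))}
      ⊆ Ioo (cylinderEndpoint h n) (cylinderEndpoint h (n - 1)) := by
    rintro x ⟨hx, hcode⟩
    simp only [sigmaCode_one, Prod.mk.injEq] at hcode
    obtain ⟨rfl, hK, hXi⟩ := hcode
    refine mem_Ioo_cylinderEndpoint hx (fun j => half_lt_iterate_ecfT hx) ?_ hn2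
    rw [floor_one_div_eq_two_mul_ecfK (iterate_ecfT_mem_ECFdom hx _).1.1, hK, hXi]
  have hH : (0 : ℝ) ≤ h := h.cast_nonneg
  have hN : (0 : ℝ) < n - 1 := by
    have : (2 : ℝ) ≤ n := by exact_mod_cast hn2
    linarith
  calc ecfMu {x : ℝ | x ∈ ECFdom ∧ sigmaCode x 1 = (h, (m, ε))}
      ≤ ecfMu (Ioo (cylinderEndpoint h n) (cylinderEndpoint h (n - 1))) := measure_mono hsub
    _ ≤ _ := ecfMu_Ioo_le (cylinderEndpoint_nonneg hH (by linarith))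
          (cylinderEndpoint_le_one hH hN)
    _ ≤ _ := by
      apply ENNReal.ofReal_le_ofReal
      rw [show ∀ a b c : ℝ, 3 / (a * b * c) = 3 / (b * c) / a by intros; ring]
      gcongr
      exact density_mul_length_le hH (by exact_mod_cast hm) hnm
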